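/- Let Δ > 0. Define Q⁻_inf(r) = (2^{−r} + r·ln 2 − 1)/(2^{−Δ} + Δ·ln 2 − 1), Q⁻_max(r) = Q⁻(−1, r), and, with X = 2^Δ, r* = log₂( (2X·ln X − X·ln(2X − 1)) / (2X·ln X − 2X·ln(2X − 1) + 2X − 2) ). Then for all real i ≤ −1, c ≤ −1 and all r with 0 ≤ r < Δ, |Q⁻(i, r) − Q⁻(c, r)| < Q⁻_max(r*) − Q⁻_inf(r*). -/

import Mathlib

/-- Φ⁻(x) = log₂(1 − 2^x) -/
noncomputable def Phim (x : ℝ) : ℝ := Real.logb 2 (1 - (2:ℝ) ^ x)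

/-- (Φ⁻)'(x) = −2^x / (1 − 2^x) -/
noncomputable def dPhim (x : ℝ) : ℝ := -(2:ℝ) ^ x / (1 - (2:ℝ) ^ x)

/-- First-order Taylor remainder E⁻(i, r) -/
noncomputable def Em (i r : ℝ) : ℝ := Phim (i - r) - Phim i + r * dPhim i

/-- Error ratio Q⁻(i, r) = E⁻(i, r)/E⁻(i, Δ) -/
noncomputable def Qm (Δ i r : ℝ) : ℝ := Em i r / Em i Δ

/-- Q⁻_inf(r) = (2^{−r} + r·ln 2 − 1)/(2^{−Δ} + Δ·ln 2 − 1) -/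
noncomputable def QmInf (Δ r : ℝ) : ℝ :=
  ((2:ℝ) ^ (-r) + r * Real.log 2 - 1) / ((2:ℝ) ^ (-Δ) + Δ * Real.log 2 - 1)

/-- Q⁻_max(r) = Q⁻(−1, r) -/
noncomputable def QmMax (Δ r : ℝ) : ℝ := Qm Δ (-1) r

/-- r* for the subtraction case, with X = 2^Δ -/
noncomputable def rStarM (Δ : ℝ) : ℝ :=
  Real.logb 2
    ((2 * (2:ℝ) ^ Δ * Real.log ((2:ℝ) ^ Δ) - (2:ℝ) ^ Δ * Real.log (2 * (2:ℝ) ^ Δ - 1)) /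
      (2 * (2:ℝ) ^ Δ * Real.log ((2:ℝ) ^ Δ) - 2 * (2:ℝ) ^ Δ * Real.log (2 * (2:ℝ) ^ Δ - 1)
        + 2 * (2:ℝ) ^ Δ - 2))

/-!
With `t = 2 ^ i`, `s = 2 ^ (-r)` and `S = 2 ^ (-Δ)` one has `Q⁻(i, r) = rem t s / rem t S`, where
`rem t` vanishes at `s = 1` and `∂ₛ rem t = remWeight t * remLim'`. The weight `remWeight t s`
increases in `s`, and so does the quotient of the weights for `t₁ < t₂`; by the monotone form of
l'Hôpital's rule `Q⁻(i, r)` therefore increases in `i` and stays above its limit `Q⁻_inf(r)` as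
`i → -∞`. For `i, c ≤ -1` both ratios thus lie in `(Q⁻_inf(r), Q⁻_max(r)]`, and it remains to
maximise `Q⁻_max - Q⁻_inf` over `r`: its derivative in `s` changes sign once, at `s = 2 ^ (-r*)`.
-/

open Real Set

section MeanValue

variable {f f' : ℝ → ℝ} {x y : ℝ}

lemma lt_of_hasDerivAt_pos (hxy : x < y) (hf : ∀ z ∈ Icc x y, HasDerivAt f (f' z) z)
    (hf' : ∀ z ∈ Ioo x y, 0 < f' z) : f x < f y := by
  obtain ⟨c, hc, hslope⟩ := exists_hasDerivAt_eq_slope f f' hxy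
    (fun z hz => (hf z hz).continuousAt.continuousWithinAt)
    (fun z hz => hf z (Ioo_subset_Icc_self hz))
  have := hf' c hc
  rw [hslope, div_pos_iff_of_pos_right (sub_pos.2 hxy)] at this
  linarith

lemma pos_of_hasDerivAt_neg_of_eq_zero (hxy : x < y)
    (hf : ∀ z ∈ Icc x y, HasDerivAt f (f' z) z) (hf' : ∀ z ∈ Ioo x y, f' z < 0)
    (hy : f y = 0) : 0 < f x := by
  have := lt_of_hasDerivAt_pos (f := fun z => -f z) hxy (fun z hz => (hf z hz).neg)
    (fun z hz => neg_pos.2 (hf' z hz))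
  linarith

lemma le_of_hasDerivAt_nonneg_of_nonpos {m : ℝ} (hf : ∀ z ∈ uIcc x m, HasDerivAt f (f' z) z)
    (hleft : ∀ z ∈ Ioo x m, 0 ≤ f' z) (hright : ∀ z ∈ Ioo m x, f' z ≤ 0) : f x ≤ f m := by
  rcases lt_trichotomy x m with hxm | rfl | hmx
  · obtain ⟨c, hc, hslope⟩ := exists_hasDerivAt_eq_slope f f' hxm
      (fun z hz => (hf z (Icc_subset_uIcc hz)).continuousAt.continuousWithinAt)
      (fun z hz => hf z (Icc_subset_uIcc (Ioo_subset_Icc_self hz)))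
    have hdiff : f m - f x = f' c * (m - x) := by
      rw [hslope, div_mul_cancel₀ _ (sub_pos.2 hxm).ne']
    nlinarith [hleft c hc]
  · exact le_rfl
  · obtain ⟨c, hc, hslope⟩ := exists_hasDerivAt_eq_slope f f' hmx
      (fun z hz => (hf z (Icc_subset_uIcc' hz)).continuousAt.continuousWithinAt)
      (fun z hz => hf z (Icc_subset_uIcc' (Ioo_subset_Icc_self hz)))
    have hdiff : f x - f m = f' c * (x - m) := by
      rw [hslope, div_mul_cancel₀ _ (sub_pos.2 hmx).ne']
    nlinarith [hright c hc]

end MeanValue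

/-- Monotone form of l'Hôpital's rule, with `w = b' / a'`. -/
theorem div_lt_div_of_hasDerivAt_mul {a b a' w : ℝ → ℝ} {x y e : ℝ} (hxy : x < y) (hye : y < e)
    (ha : ∀ u ∈ Icc x e, HasDerivAt a (a' u) u)
    (hb : ∀ u ∈ Icc x e, HasDerivAt b (w u * a' u) u)
    (ha' : ∀ u ∈ Ioo x e, a' u < 0) (hw : StrictMonoOn w (Ioo x e))
    (hae : a e = 0) (hbe : b e = 0) :
    b x / a x < b y / a y := by
  have ha_pos : ∀ u ∈ Ico x e, 0 < a u := fun u hu =>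
    pos_of_hasDerivAt_neg_of_eq_zero hu.2 (fun v hv => ha v ⟨hu.1.trans hv.1, hv.2⟩)
      (fun v hv => ha' v ⟨hu.1.trans_lt hv.1, hv.2⟩) hae
  -- `b - w u * a` has derivative `(w v - w u) a' v < 0` beyond `u` and vanishes at `e`.
  have hwa_lt_b : ∀ u ∈ Ioo x e, w u * a u < b u := by
    intro u hu
    have := pos_of_hasDerivAt_neg_of_eq_zero (f := fun v => b v - w u * a v)
      (f' := fun v => (w v - w u) * a' v) hu.2
      (fun v hv => ((hb v ⟨hu.1.le.trans hv.1, hv.2⟩).sub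
        ((ha v ⟨hu.1.le.trans hv.1, hv.2⟩).const_mul (w u))).congr_deriv (by ring))
      (fun v hv => mul_neg_of_pos_of_neg
        (sub_pos.2 (hw hu ⟨hu.1.trans hv.1, hv.2⟩ hv.1)) (ha' v ⟨hu.1.trans hv.1, hv.2⟩))
      (by simp [hae, hbe])
    linarith
  refine lt_of_hasDerivAt_pos hxy
    (fun u hu => (hb u ⟨hu.1, hu.2.trans hye.le⟩).div (ha u ⟨hu.1, hu.2.trans hye.le⟩)
      (ha_pos u ⟨hu.1, hu.2.trans_lt hye⟩).ne') (fun u hu => ?_)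
  have hu : u ∈ Ioo x e := ⟨hu.1, hu.2.trans hye⟩
  have hab := hwa_lt_b u hu
  have ha'u := ha' u hu
  exact div_pos (by nlinarith) (pow_pos (ha_pos u ⟨hu.1.le, hu.2⟩) 2)

lemma two_mul_lt_log_sub_log {y : ℝ} (h0 : 0 < y) (h1 : y < 1) :
    2 * y < log (1 + y) - log (1 - y) := by
  have hsum := hasSum_log_sub_log_of_abs_lt_one (abs_lt.2 ⟨by linarith, h1⟩)
  have := sum_le_hasSum (Finset.range 2) (fun k _ => by positivity) hsum
  norm_num [Finset.sum_range_succ] at this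
  nlinarith [pow_pos h0 3]

noncomputable def rem (t s : ℝ) : ℝ := log (1 - t) - log (1 - t * s) - t / (1 - t) * log s

/-- The limit of `rem t s / (t / (1 - t))` as `t → 0`. -/
noncomputable def remLim (s : ℝ) : ℝ := s - 1 - log s

noncomputable def remWeight (t s : ℝ) : ℝ := t / ((1 - t) * (1 - t * s))

section Remainder

variable {t t₁ t₂ s S : ℝ}

lemma hasDerivAt_remLim (hs : s ≠ 0) : HasDerivAt remLim (1 - s⁻¹) s :=
  ((hasDerivAt_id s).sub_const 1).sub (hasDerivAt_log hs)

lemma hasDerivAt_rem (ht : t ≠ 1) (hs : s ≠ 0) (hts : t * s ≠ 1) :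
    HasDerivAt (rem t) (remWeight t s * (1 - s⁻¹)) s := by
  have hlin : HasDerivAt (fun z => 1 - t * z) (-t) s := by
    simpa using ((hasDerivAt_id s).const_mul t).const_sub 1
  have h := ((hasDerivAt_const s (log (1 - t))).sub
    ((hasDerivAt_log (sub_ne_zero.2 hts.symm)).comp s hlin)).sub
    ((hasDerivAt_log hs).const_mul (t / (1 - t)))
  refine h.congr_deriv ?_
  have : 1 - t ≠ 0 := sub_ne_zero.2 ht.symm
  have : 1 - t * s ≠ 0 := sub_ne_zero.2 hts.symm
  simp only [remWeight]
  field_simp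
  ring

lemma rem_one (t : ℝ) : rem t 1 = 0 := by simp [rem]

lemma remLim_one : remLim 1 = 0 := by simp [remLim]

lemma remLim_pos (hs0 : 0 < s) (hs1 : s ≠ 1) : 0 < remLim s := by
  have := log_lt_sub_one_of_pos hs0 hs1
  simp only [remLim]
  linarith

lemma remWeight_pos (ht0 : 0 < t) (ht1 : t < 1) (hs : s ≤ 1) : 0 < remWeight t s :=
  div_pos ht0 (mul_pos (by linarith) (by nlinarith))

lemma rem_pos (ht0 : 0 < t) (ht1 : t < 1) (hs0 : 0 < s) (hs1 : s < 1) : 0 < rem t s :=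
  pos_of_hasDerivAt_neg_of_eq_zero hs1
    (fun z hz => hasDerivAt_rem ht1.ne (hs0.trans_le hz.1).ne'
      (mul_lt_one_of_nonneg_of_lt_one_left ht0.le ht1 hz.2).ne)
    (fun z hz => mul_neg_of_pos_of_neg (remWeight_pos ht0 ht1 hz.2.le)
      (by have := (one_lt_inv₀ (hs0.trans hz.1)).2 hz.2; linarith))
    (rem_one t)


lemma remLim_div_lt_rem_div (ht0 : 0 < t) (ht1 : t < 1) (hS : 0 < S) (hSs : S < s)
    (hs : s < 1) : remLim s / remLim S < rem t s / rem t S := by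
  have hmem : ∀ u ∈ Icc S 1, u ≠ 0 ∧ t * u ≠ 1 := fun u hu =>
    ⟨(hS.trans_le hu.1).ne', (mul_lt_one_of_nonneg_of_lt_one_left ht0.le ht1 hu.2).ne⟩
  have key := div_lt_div_of_hasDerivAt_mul hSs hs
    (fun u hu => hasDerivAt_remLim (hmem u hu).1)
    (fun u hu => hasDerivAt_rem ht1.ne (hmem u hu).1 (hmem u hu).2)
    (fun u hu => by have := (one_lt_inv₀ (hS.trans hu.1)).2 hu.2; linarith)
    (fun u hu v hv huv => div_lt_div_of_pos_left ht0
      (mul_pos (by linarith) (by nlinarith [hv.2]))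
      (mul_lt_mul_of_pos_left (by nlinarith) (by linarith)))
    remLim_one (rem_one t)
  have hBS := remLim_pos hS (hSs.trans hs).ne
  have hBs := remLim_pos (hS.trans hSs) hs.ne
  have hPS := rem_pos ht0 ht1 hS (hSs.trans hs)
  rw [div_lt_div_iff₀ hBS hBs] at key
  rw [div_lt_div_iff₀ hBS hPS]
  linarith

lemma rem_div_lt_rem_div (ht₁ : 0 < t₁) (ht₁₂ : t₁ < t₂) (ht₂ : t₂ < 1) (hS : 0 < S)
    (hSs : S < s) (hs : s < 1) : rem t₁ s / rem t₁ S < rem t₂ s / rem t₂ S := by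
  have hmem : ∀ t ∈ Ioo 0 1, ∀ u ∈ Icc S 1, u ≠ 0 ∧ t * u ≠ 1 := fun t ht u hu =>
    ⟨(hS.trans_le hu.1).ne', (mul_lt_one_of_nonneg_of_lt_one_left ht.1.le ht.2 hu.2).ne⟩
  have ht₁' : t₁ ∈ Ioo 0 1 := ⟨ht₁, ht₁₂.trans ht₂⟩
  have ht₂' : t₂ ∈ Ioo 0 1 := ⟨ht₁.trans ht₁₂, ht₂⟩
  have hweight : ∀ u ∈ Ioo S 1, remWeight t₂ u / remWeight t₁ u
      = t₂ * (1 - t₁) / (t₁ * (1 - t₂)) * ((1 - t₁ * u) / (1 - t₂ * u)) := by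
    intro u hu
    have h₁ := (hmem t₁ ht₁' u (Ioo_subset_Icc_self hu)).2
    have h₂ := (hmem t₂ ht₂' u (Ioo_subset_Icc_self hu)).2
    have : 1 - t₁ * u ≠ 0 := sub_ne_zero.2 h₁.symm
    have : 1 - t₂ * u ≠ 0 := sub_ne_zero.2 h₂.symm
    have : 1 - t₁ ≠ 0 := sub_ne_zero.2 ht₁'.2.ne'
    have : 1 - t₂ ≠ 0 := sub_ne_zero.2 ht₂'.2.ne'
    simp only [remWeight]
    field_simp
  have key := div_lt_div_of_hasDerivAt_mul (w := fun u => remWeight t₂ u / remWeight t₁ u)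
    hSs hs
    (fun u hu => hasDerivAt_rem ht₁'.2.ne (hmem t₁ ht₁' u hu).1 (hmem t₁ ht₁' u hu).2)
    (fun u hu => (hasDerivAt_rem ht₂'.2.ne (hmem t₂ ht₂' u hu).1
      (hmem t₂ ht₂' u hu).2).congr_deriv (by
        rw [← mul_assoc, div_mul_cancel₀ _ (remWeight_pos ht₁ ht₁'.2 hu.2).ne']))
    (fun u hu => mul_neg_of_pos_of_neg (remWeight_pos ht₁ ht₁'.2 hu.2.le)
      (by have := (one_lt_inv₀ (hS.trans hu.1)).2 hu.2; linarith))
    (fun u hu v hv huv => by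
      simp only [hweight u hu, hweight v hv]
      refine mul_lt_mul_of_pos_left ?_ (div_pos (mul_pos ht₂'.1 (by linarith))
        (mul_pos ht₁ (by linarith)))
      rw [div_lt_div_iff₀ (by nlinarith [hu.2]) (by nlinarith [hv.2])]
      nlinarith)
    (rem_one t₁) (rem_one t₂)
  have hBS := rem_pos ht₁ ht₁'.2 hS (hSs.trans hs)
  have hBs := rem_pos ht₁ ht₁'.2 (hS.trans hSs) hs
  have hPS := rem_pos ht₂'.1 ht₂ hS (hSs.trans hs)
  rw [div_lt_div_iff₀ hBS hBs] at key
  rw [div_lt_div_iff₀ hBS hPS]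
  linarith

end Remainder

section RatioGap

variable {s S : ℝ}

lemma rem_inv_two (hs : s ≠ 2) : rem 2⁻¹ s = -log s - log (2 - s) := by
  have h₁ : (1:ℝ) - 2⁻¹ = 2⁻¹ := by norm_num
  have h₂ : (1:ℝ) - 2⁻¹ * s = (2 - s) / 2 := by ring
  rw [rem, h₁, h₂, div_self (inv_ne_zero two_ne_zero), one_mul,
    log_div (sub_ne_zero.2 hs.symm) two_ne_zero, log_inv]
  ring

lemma remLim_lt_rem_inv_two (hs2 : s < 2) (hs1 : s ≠ 1) : remLim s < rem 2⁻¹ s := by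
  have := log_lt_sub_one_of_pos (sub_pos.2 hs2) (by contrapose! hs1; linarith)
  rw [rem_inv_two hs2.ne, remLim]
  linarith

lemma rem_inv_two_lt_two_mul_remLim (hs0 : 0 < s) (hs1 : s < 1) :
    rem 2⁻¹ s < 2 * remLim s := by
  have := two_mul_lt_log_sub_log (y := 1 - s) (by linarith) (by linarith)
  rw [rem_inv_two (by linarith), remLim]
  rw [show 1 + (1 - s) = 2 - s by ring, show 1 - (1 - s) = s by ring] at this
  linarith

noncomputable def ratioGap (S s : ℝ) : ℝ := rem 2⁻¹ s / rem 2⁻¹ S - remLim s / remLim S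

lemma hasDerivAt_ratioGap (hB : remLim S ≠ 0) (hs0 : 0 < s) (hs2 : s < 2) :
    HasDerivAt (ratioGap S)
      ((1 - s) / s * (2 - 2 * remLim S / rem 2⁻¹ S - s) / ((2 - s) * remLim S)) s := by
  have hs : s ≠ 0 := hs0.ne'
  have h2s : 2 - s ≠ 0 := (sub_pos.2 hs2).ne'
  have h := ((hasDerivAt_rem (t := 2⁻¹) (by norm_num) hs (by linarith)).div_const (rem 2⁻¹ S)).sub
    ((hasDerivAt_remLim hs).div_const (remLim S))
  refine h.congr_deriv ?_
  simp only [remWeight]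
  field_simp
  ring

lemma ratioGap_le (hS0 : 0 < S) (hS1 : S < 1) (hs0 : 0 < s) (hs1 : s < 1) :
    ratioGap S s ≤ ratioGap S (2 - 2 * remLim S / rem 2⁻¹ S) := by
  have hB := remLim_pos hS0 hS1.ne
  have hBP := remLim_lt_rem_inv_two (by linarith) hS1.ne
  have hP2B := rem_inv_two_lt_two_mul_remLim hS0 hS1
  have hP : 0 < rem 2⁻¹ S := hB.trans hBP
  set m := 2 - 2 * remLim S / rem 2⁻¹ S with hm
  have hm0 : 0 < m := by
    have : 2 * remLim S / rem 2⁻¹ S < 2 := by rw [div_lt_iff₀ hP]; linarith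
    linarith
  have hm1 : m < 1 := by
    have : 1 < 2 * remLim S / rem 2⁻¹ S := by rw [lt_div_iff₀ hP]; linarith
    linarith
  have hmem : ∀ z ∈ uIcc s m, 0 < z ∧ z < 1 := fun z hz =>
    ⟨lt_of_lt_of_le (lt_min hs0 hm0) hz.1, lt_of_le_of_lt hz.2 (max_lt hs1 hm1)⟩
  refine le_of_hasDerivAt_nonneg_of_nonpos
    (fun z hz => hasDerivAt_ratioGap hB.ne' (hmem z hz).1 (by linarith [(hmem z hz).2]))
    (fun z hz => ?_) (fun z hz => ?_)
  · obtain ⟨hz0, hz1⟩ := hmem z (Icc_subset_uIcc (Ioo_subset_Icc_self hz))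
    exact div_nonneg (mul_nonneg (div_nonneg (by linarith) hz0.le) (by linarith [hz.2]))
      (mul_nonneg (by linarith) hB.le)
  · obtain ⟨hz0, hz1⟩ := hmem z (Icc_subset_uIcc' (Ioo_subset_Icc_self hz))
    exact div_nonpos_of_nonpos_of_nonneg
      (mul_nonpos_of_nonneg_of_nonpos (div_nonneg (by linarith) hz0.le) (by linarith [hz.1]))
      (mul_nonneg (by linarith) hB.le)

end RatioGap

lemma Em_eq_rem (i r : ℝ) : Em i r = -rem (2 ^ i) (2 ^ (-r)) / log 2 := by
  have hl2 : log 2 ≠ 0 := (log_pos one_lt_two).ne'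
  unfold Em Phim dPhim rem Real.logb
  rw [sub_eq_add_neg i r, rpow_add two_pos, log_rpow two_pos]
  field_simp
  ring

lemma Qm_eq_rem_div_rem (Δ i r : ℝ) :
    Qm Δ i r = rem (2 ^ i) (2 ^ (-r)) / rem (2 ^ i) (2 ^ (-Δ)) := by
  rw [Qm, Em_eq_rem, Em_eq_rem, div_div_div_cancel_right₀ (log_pos one_lt_two).ne',
    neg_div_neg_eq]

lemma QmInf_eq_remLim_div_remLim (Δ r : ℝ) :
    QmInf Δ r = remLim (2 ^ (-r)) / remLim (2 ^ (-Δ)) := by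
  rw [QmInf, remLim, remLim, log_rpow two_pos, log_rpow two_pos]
  ring_nf

lemma QmMax_sub_QmInf (Δ r : ℝ) :
    QmMax Δ r - QmInf Δ r = ratioGap (2 ^ (-Δ)) (2 ^ (-r)) := by
  rw [QmMax, Qm_eq_rem_div_rem, QmInf_eq_remLim_div_remLim, rpow_neg_one, ratioGap]

section Exponents

variable {Δ i j r : ℝ}

lemma QmInf_lt_Qm (hi : i < 0) (hr : 0 < r) (hrΔ : r < Δ) : QmInf Δ r < Qm Δ i r := by
  rw [QmInf_eq_remLim_div_remLim, Qm_eq_rem_div_rem]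
  exact remLim_div_lt_rem_div (rpow_pos_of_pos two_pos i)
    (rpow_lt_one_of_one_lt_of_neg one_lt_two hi) (rpow_pos_of_pos two_pos _)
    (rpow_lt_rpow_of_exponent_lt one_lt_two (by linarith))
    (rpow_lt_one_of_one_lt_of_neg one_lt_two (by linarith))

lemma Qm_lt_Qm (hij : i < j) (hj : j < 0) (hr : 0 < r) (hrΔ : r < Δ) :
    Qm Δ i r < Qm Δ j r := by
  rw [Qm_eq_rem_div_rem, Qm_eq_rem_div_rem]
  exact rem_div_lt_rem_div (rpow_pos_of_pos two_pos i)
    (rpow_lt_rpow_of_exponent_lt one_lt_two hij) (rpow_lt_one_of_one_lt_of_neg one_lt_two hj)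
    (rpow_pos_of_pos two_pos _) (rpow_lt_rpow_of_exponent_lt one_lt_two (by linarith))
    (rpow_lt_one_of_one_lt_of_neg one_lt_two (by linarith))

lemma Qm_le_QmMax (hi : i ≤ -1) (hr : 0 < r) (hrΔ : r < Δ) : Qm Δ i r ≤ QmMax Δ r := by
  rcases hi.lt_or_eq with hi | rfl
  · exact (Qm_lt_Qm hi (by norm_num) hr hrΔ).le
  · exact le_rfl

lemma two_rpow_neg_rStarM (hΔ : 0 < Δ) :
    (2:ℝ) ^ (-rStarM Δ) = 2 - 2 * remLim (2 ^ (-Δ)) / rem 2⁻¹ (2 ^ (-Δ)) := by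
  set X := (2:ℝ) ^ Δ with hXdef
  have hX : 1 < X := one_lt_rpow one_lt_two hΔ
  have hX0 : 0 < X := by linarith
  have hS : (2:ℝ) ^ (-Δ) = X⁻¹ := rpow_neg zero_le_two Δ
  have hS1 : X⁻¹ < 1 := inv_lt_one_of_one_lt₀ hX
  have hB := remLim_pos (inv_pos.2 hX0) hS1.ne
  have hBP := remLim_lt_rem_inv_two (by linarith) hS1.ne
  have hPX : rem 2⁻¹ X⁻¹ = 2 * log X - log (2 * X - 1) := by
    rw [rem_inv_two (by linarith), log_inv, show 2 - X⁻¹ = (2 * X - 1) / X by field_simp,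
      log_div (by linarith) hX0.ne']
    ring
  have hBX : remLim X⁻¹ = X⁻¹ - 1 + log X := by
    rw [remLim, log_inv]
    ring
  have harg : (2 * X * log X - X * log (2 * X - 1)) /
      (2 * X * log X - 2 * X * log (2 * X - 1) + 2 * X - 2)
      = rem 2⁻¹ X⁻¹ / (2 * rem 2⁻¹ X⁻¹ - 2 * remLim X⁻¹) := by
    rw [hPX, hBX]
    field_simp
    ring
  rw [hS, rStarM, harg, rpow_neg zero_le_two, rpow_logb two_pos (by norm_num)
    (div_pos (hB.trans hBP) (by linarith)), inv_div, sub_div,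
    mul_div_cancel_right₀ _ (hB.trans hBP).ne']

lemma QmMax_sub_QmInf_le (hΔ : 0 < Δ) (hr : 0 < r) :
    QmMax Δ r - QmInf Δ r ≤ QmMax Δ (rStarM Δ) - QmInf Δ (rStarM Δ) := by
  rw [QmMax_sub_QmInf, QmMax_sub_QmInf, two_rpow_neg_rStarM hΔ]
  exact ratioGap_le (rpow_pos_of_pos two_pos _)
    (rpow_lt_one_of_one_lt_of_neg one_lt_two (by linarith)) (rpow_pos_of_pos two_pos _)
    (rpow_lt_one_of_one_lt_of_neg one_lt_two (by linarith))

end Exponents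

theorem stmt_12 (Δ : ℝ) (hΔ : 0 < Δ) :
    ∀ i c r : ℝ, i ≤ -1 → c ≤ -1 → 0 ≤ r → r < Δ →
      |Qm Δ i r - Qm Δ c r| < QmMax Δ (rStarM Δ) - QmInf Δ (rStarM Δ) := by
  intro i c r hi hc hr hrΔ
  have bounds : ∀ x ≤ -1, ∀ ρ, 0 < ρ → ρ < Δ → QmInf Δ ρ < Qm Δ x ρ ∧ Qm Δ x ρ ≤ QmMax Δ ρ :=
    fun x hx ρ hρ hρΔ => ⟨QmInf_lt_Qm (by linarith) hρ hρΔ, Qm_le_QmMax hx hρ hρΔ⟩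
  rcases hr.eq_or_lt with rfl | hr
  · obtain ⟨hinf, hmax⟩ := bounds (-1) le_rfl (Δ / 2) (by linarith) (by linarith)
    have := QmMax_sub_QmInf_le hΔ (half_pos hΔ)
    simp only [Qm, Em, sub_zero, zero_mul, add_zero, sub_self, zero_div, abs_zero]
    linarith
  · obtain ⟨hi_inf, hi_max⟩ := bounds i hi r hr hrΔ
    obtain ⟨hc_inf, hc_max⟩ := bounds c hc r hr hrΔ
    have := QmMax_sub_QmInf_le hΔ hr
    rw [abs_sub_lt_iff]
    constructor <;> linarith
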